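/- Let M be a simple object of C with weak dual M∨ as in (iii), and let Y be an invertible simple object of C. Then dim_k Hom(M∨ ⊗ M, Y) equals 1 if M ⊗ Y ≅ M and equals 0 otherwise; moreover M ⊗ Y ≅ M if and only if Y ⊗ M∨ ≅ M∨. -/
import Mathlib

open CategoryTheory MonoidalCategory Limits

section Helpers

variable {k : Type*} [Field k] {C : Type*} [Category C] [MonoidalCategory C]
  [Preadditive C] [Linear k C] [MonoidalPreadditive C] [MonoidalLinear k C]

lemma finrank_zero_of_forall_zero {A B : C} (h : ∀ f : A ⟶ B, f = 0) :
    Module.finrank k (A ⟶ B) = 0 := by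
  haveI : Subsingleton (A ⟶ B) := ⟨fun a b => (h a).trans (h b).symm⟩
  exact Module.finrank_zero_of_subsingleton

/-- Conjugating by isomorphisms as a linear equivalence of hom-spaces. -/
def homCongrLin {A A' B B' : C} (eA : A ≅ A') (eB : B ≅ B') :
    (A ⟶ B) ≃ₗ[k] (A' ⟶ B') where
  toFun f := eA.inv ≫ f ≫ eB.hom
  invFun g := eA.hom ≫ g ≫ eB.inv
  map_add' f g := by simp
  map_smul' r f := by simp
  left_inv f := by simp
  right_inv g := by simp

lemma finrank_hom_congr {A A' B B' : C} (eA : A ≅ A') (eB : B ≅ B') :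
    Module.finrank k (A ⟶ B) = Module.finrank k (A' ⟶ B') :=
  (homCongrLin (k := k) eA eB).finrank_eq

lemma whiskerRight_cancel' {A B Z Z' : C} (e : (Z ⊗ Z') ≅ 𝟙_ C) {f : A ⟶ B}
    (h : f ▷ Z = 0) : f = 0 := by
  have h2 : f ▷ (Z ⊗ Z') = 0 := by rw [whiskerRight_tensor, h]; simp
  have h4 : f ▷ 𝟙_ C = 0 :=
    (cancel_epi (A ◁ e.hom)).mp (by rw [comp_zero, whisker_exchange, h2, zero_comp])
  have h5 : (ρ_ A).inv ≫ ((ρ_ A).hom ≫ f ≫ (ρ_ B).inv) ≫ (ρ_ B).hom = 0 := by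
    rw [← MonoidalCategory.whiskerRight_id, h4]; simp
  simpa using h5

lemma whiskerLeft_cancel' {A B Z Z' : C} (e : (Z' ⊗ Z) ≅ 𝟙_ C) {f : A ⟶ B}
    (h : Z ◁ f = 0) : f = 0 := by
  have h2 : (Z' ⊗ Z) ◁ f = 0 := by rw [tensor_whiskerLeft, h]; simp
  have h4 : 𝟙_ C ◁ f = 0 :=
    (cancel_epi (e.hom ▷ A)).mp (by rw [comp_zero, ← whisker_exchange, h2, zero_comp])
  have h5 : (λ_ A).inv ≫ ((λ_ A).hom ≫ f ≫ (λ_ B).inv) ≫ (λ_ B).hom = 0 := by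
    rw [← id_whiskerLeft, h4]; simp
  simpa using h5

lemma finrank_hom_tensorRight (hfd : ∀ X Z : C, FiniteDimensional k (X ⟶ Z))
    {A Y Y' : C} (e1 : (Y ⊗ Y') ≅ 𝟙_ C) (e2 : (Y' ⊗ Y) ≅ 𝟙_ C) :
    Module.finrank k (A ⟶ Y) = Module.finrank k ((A ⊗ Y') ⟶ 𝟙_ C) := by
  haveI := hfd A Y; haveI := hfd (A ⊗ Y') (𝟙_ C)
  let φ : (A ⟶ Y) →ₗ[k] ((A ⊗ Y') ⟶ 𝟙_ C) :=
    { toFun := fun f => (f ▷ Y') ≫ e1.hom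
      map_add' := fun f g => by simp
      map_smul' := fun r f => by simp }
  let u : A ≅ (A ⊗ Y') ⊗ Y := (ρ_ A).symm ≪≫ whiskerLeftIso A e2.symm ≪≫ (α_ A Y' Y).symm
  let ψ : ((A ⊗ Y') ⟶ 𝟙_ C) →ₗ[k] (A ⟶ Y) :=
    { toFun := fun g => u.hom ≫ (g ▷ Y) ≫ (λ_ Y).hom
      map_add' := fun f g => by simp
      map_smul' := fun r f => by simp }
  have hφ : Function.Injective φ := by
    rw [injective_iff_map_eq_zero]
    intro f hf
    simp only [φ, LinearMap.coe_mk, AddHom.coe_mk] at hf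
    have hf2 : f ▷ Y' = 0 := (cancel_mono e1.hom).mp (by rw [zero_comp]; exact hf)
    exact whiskerRight_cancel' e2 hf2
  have hψ : Function.Injective ψ := by
    rw [injective_iff_map_eq_zero]
    intro g hg
    simp only [ψ, LinearMap.coe_mk, AddHom.coe_mk] at hg
    have hg2 : g ▷ Y = 0 := by
      have h' : u.inv ≫ (u.hom ≫ (g ▷ Y) ≫ (λ_ Y).hom) ≫ (λ_ Y).inv = 0 := by
        rw [hg]; simp
      simpa using h'
    exact whiskerRight_cancel' e1 hg2
  exact le_antisymm (LinearMap.finrank_le_finrank_of_injective hφ)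
    (LinearMap.finrank_le_finrank_of_injective hψ)

lemma finrank_hom_tensorLeft (hfd : ∀ X Z : C, FiniteDimensional k (X ⟶ Z))
    {A Y Y' : C} (e1 : (Y ⊗ Y') ≅ 𝟙_ C) (e2 : (Y' ⊗ Y) ≅ 𝟙_ C) :
    Module.finrank k (A ⟶ Y) = Module.finrank k ((Y' ⊗ A) ⟶ 𝟙_ C) := by
  haveI := hfd A Y; haveI := hfd (Y' ⊗ A) (𝟙_ C)
  let φ : (A ⟶ Y) →ₗ[k] ((Y' ⊗ A) ⟶ 𝟙_ C) :=
    { toFun := fun f => (Y' ◁ f) ≫ e2.hom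
      map_add' := fun f g => by simp
      map_smul' := fun r f => by simp }
  let v : A ≅ Y ⊗ (Y' ⊗ A) := (λ_ A).symm ≪≫ whiskerRightIso e1.symm A ≪≫ α_ Y Y' A
  let ψ : ((Y' ⊗ A) ⟶ 𝟙_ C) →ₗ[k] (A ⟶ Y) :=
    { toFun := fun g => v.hom ≫ (Y ◁ g) ≫ (ρ_ Y).hom
      map_add' := fun f g => by simp
      map_smul' := fun r f => by simp }
  have hφ : Function.Injective φ := by
    rw [injective_iff_map_eq_zero]
    intro f hf
    simp only [φ, LinearMap.coe_mk, AddHom.coe_mk] at hf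
    have hf2 : Y' ◁ f = 0 := (cancel_mono e2.hom).mp (by rw [zero_comp]; exact hf)
    exact whiskerLeft_cancel' e1 hf2
  have hψ : Function.Injective ψ := by
    rw [injective_iff_map_eq_zero]
    intro g hg
    simp only [ψ, LinearMap.coe_mk, AddHom.coe_mk] at hg
    have hg2 : Y ◁ g = 0 := by
      have h' : v.inv ≫ (v.hom ≫ (Y ◁ g) ≫ (ρ_ Y).hom) ≫ (ρ_ Y).inv = 0 := by
        rw [hg]; simp
      simpa using h'
    exact whiskerLeft_cancel' e2 hg2
  exact le_antisymm (LinearMap.finrank_le_finrank_of_injective hφ)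
    (LinearMap.finrank_le_finrank_of_injective hψ)

lemma finrank_end_tensorRight (hfd : ∀ X Z : C, FiniteDimensional k (X ⟶ Z))
    {X Y Y' : C} (e1 : (Y ⊗ Y') ≅ 𝟙_ C) (e2 : (Y' ⊗ Y) ≅ 𝟙_ C) :
    Module.finrank k ((X ⊗ Y') ⟶ (X ⊗ Y')) = Module.finrank k (X ⟶ X) := by
  haveI := hfd X X; haveI := hfd (X ⊗ Y') (X ⊗ Y')
  let w : X ≅ (X ⊗ Y') ⊗ Y := (ρ_ X).symm ≪≫ whiskerLeftIso X e2.symm ≪≫ (α_ X Y' Y).symm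
  let φ : ((X ⊗ Y') ⟶ (X ⊗ Y')) →ₗ[k] (X ⟶ X) :=
    { toFun := fun g => w.hom ≫ (g ▷ Y) ≫ w.inv
      map_add' := fun f g => by simp
      map_smul' := fun r f => by simp }
  let ψ : (X ⟶ X) →ₗ[k] ((X ⊗ Y') ⟶ (X ⊗ Y')) :=
    { toFun := fun f => f ▷ Y'
      map_add' := fun f g => by simp
      map_smul' := fun r f => by simp }
  have hφ : Function.Injective φ := by
    rw [injective_iff_map_eq_zero]
    intro g hg
    simp only [φ, LinearMap.coe_mk, AddHom.coe_mk] at hg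
    have hg2 : g ▷ Y = 0 := by
      have h' : w.inv ≫ (w.hom ≫ (g ▷ Y) ≫ w.inv) ≫ w.hom = 0 := by rw [hg]; simp
      simpa using h'
    exact whiskerRight_cancel' e1 hg2
  have hψ : Function.Injective ψ := by
    rw [injective_iff_map_eq_zero]
    intro f hf
    simp only [ψ, LinearMap.coe_mk, AddHom.coe_mk] at hf
    exact whiskerRight_cancel' e2 hf
  exact le_antisymm (LinearMap.finrank_le_finrank_of_injective hφ)
    (LinearMap.finrank_le_finrank_of_injective hψ)

lemma finrank_end_tensorLeft (hfd : ∀ X Z : C, FiniteDimensional k (X ⟶ Z))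
    {X Y Y' : C} (e1 : (Y ⊗ Y') ≅ 𝟙_ C) (e2 : (Y' ⊗ Y) ≅ 𝟙_ C) :
    Module.finrank k ((Y' ⊗ X) ⟶ (Y' ⊗ X)) = Module.finrank k (X ⟶ X) := by
  haveI := hfd X X; haveI := hfd (Y' ⊗ X) (Y' ⊗ X)
  let v : X ≅ Y ⊗ (Y' ⊗ X) := (λ_ X).symm ≪≫ whiskerRightIso e1.symm X ≪≫ α_ Y Y' X
  let φ : ((Y' ⊗ X) ⟶ (Y' ⊗ X)) →ₗ[k] (X ⟶ X) :=
    { toFun := fun g => v.hom ≫ (Y ◁ g) ≫ v.inv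
      map_add' := fun f g => by simp
      map_smul' := fun r f => by simp }
  let ψ : (X ⟶ X) →ₗ[k] ((Y' ⊗ X) ⟶ (Y' ⊗ X)) :=
    { toFun := fun f => Y' ◁ f
      map_add' := fun f g => by simp
      map_smul' := fun r f => by simp }
  have hφ : Function.Injective φ := by
    rw [injective_iff_map_eq_zero]
    intro g hg
    simp only [φ, LinearMap.coe_mk, AddHom.coe_mk] at hg
    have hg2 : Y ◁ g = 0 := by
      have h' : v.inv ≫ (v.hom ≫ (Y ◁ g) ≫ v.inv) ≫ v.hom = 0 := by rw [hg]; simp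
      simpa using h'
    exact whiskerLeft_cancel' e2 hg2
  have hψ : Function.Injective ψ := by
    rw [injective_iff_map_eq_zero]
    intro f hf
    simp only [ψ, LinearMap.coe_mk, AddHom.coe_mk] at hf
    exact whiskerLeft_cancel' e1 hf
  exact le_antisymm (LinearMap.finrank_le_finrank_of_injective hφ)
    (LinearMap.finrank_le_finrank_of_injective hψ)

lemma simple_of_finrank_end_one [HasFiniteBiproducts C]
    (hss : ∀ X : C, ∃ (n : ℕ) (f : Fin n → C), (∀ i, Simple (f i)) ∧ Nonempty (X ≅ ⨁ f))
    (hfd : ∀ X Z : C, FiniteDimensional k (X ⟶ Z))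
    {Z : C} (h : Module.finrank k (Z ⟶ Z) = 1) : Simple Z := by
  obtain ⟨n, f, hfs, ⟨e⟩⟩ := hss Z
  haveI := hfd (⨁ f) (⨁ f)
  have hEnd : Module.finrank k ((⨁ f) ⟶ (⨁ f)) = 1 := by
    rw [← finrank_hom_congr (k := k) e e]; exact h
  have hn0 : n ≠ 0 := by
    rintro rfl
    have hid : (𝟙 (⨁ f) : _) = 0 := by
      rw [← biproduct.total]
      simp
    have : ∀ a : (⨁ f) ⟶ (⨁ f), a = 0 := fun a => by
      rw [← Category.comp_id a, hid, comp_zero]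
    rw [finrank_zero_of_forall_zero this] at hEnd
    exact zero_ne_one hEnd
  have hli : LinearIndependent k
      (fun i : Fin n => biproduct.π f i ≫ biproduct.ι f i) := by
    rw [Fintype.linearIndependent_iff]
    intro g hg j
    haveI := hfs j
    have hcomp := congrArg
      (fun h => biproduct.ι f j ≫ h ≫ biproduct.π f j) hg
    simp only [Preadditive.comp_sum, Preadditive.sum_comp, Linear.comp_smul,
      Linear.smul_comp, Category.assoc, comp_zero, zero_comp] at hcomp
    have hterm : ∀ i : Fin n,
        g i • (biproduct.ι f j ≫ biproduct.π f i ≫ biproduct.ι f i ≫ biproduct.π f j)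
          = if i = j then g j • 𝟙 (f j) else 0 := by
      intro i
      by_cases hij : i = j
      · subst hij; simp [biproduct.ι_π_self_assoc]
      · simp [biproduct.ι_π, Ne.symm hij, hij]
    rw [Finset.sum_congr rfl (fun i _ => hterm i)] at hcomp
    simp only [Finset.sum_ite_eq', Finset.mem_univ, if_true] at hcomp
    rcases smul_eq_zero.mp hcomp with h0 | h0
    · exact h0
    · exact absurd h0 (id_nonzero (f j))
  have hcard : n ≤ 1 := by
    have := hli.fintype_card_le_finrank
    simpa [hEnd] using this
  obtain rfl : n = 1 := by omega
  haveI := hfs 0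
  have i1 : (⨁ f) ≅ f 0 :=
    { hom := biproduct.π f 0
      inv := biproduct.ι f 0
      hom_inv_id := by rw [← biproduct.total, Fin.sum_univ_one]
      inv_hom_id := by simp }
  exact Simple.of_iso (e ≪≫ i1)

end Helpers

/-- An object `X` of a monoidal category is invertible if there exists `X'` with
`X ⊗ X' ≅ 𝟙 ≅ X' ⊗ X`. -/
def IsInvertibleObj {C : Type*} [Category C] [MonoidalCategory C] (X : C) : Prop :=
  ∃ X' : C, Nonempty ((X ⊗ X') ≅ 𝟙_ C) ∧ Nonempty ((X' ⊗ X) ≅ 𝟙_ C)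

/-- for a simple M with weak dual M∨ and an invertible simple Y,
dim Hom(M∨ ⊗ M, Y) = 1 if M ⊗ Y ≅ M and 0 otherwise; and M ⊗ Y ≅ M iff Y ⊗ M∨ ≅ M∨. -/
theorem stmt3 (k : Type*) [Field k] [CharZero k]
    (C : Type*) [Category C] [MonoidalCategory C]
    [Preadditive C] [Linear k C] [MonoidalPreadditive C] [MonoidalLinear k C]
    [HasFiniteBiproducts C]
    -- (i) semisimplicity with finitely many simples, finite-dimensional Homs,
    -- one-dimensional endomorphism rings of simples, no Homs between non-isomorphic simples
    (hss : ∀ X : C, ∃ (n : ℕ) (f : Fin n → C), (∀ i, Simple (f i)) ∧ Nonempty (X ≅ ⨁ f))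
    (hfin : ∃ (n : ℕ) (f : Fin n → C), ∀ X : C, Simple X → ∃ i, Nonempty (X ≅ f i))
    (hfd : ∀ X Y : C, FiniteDimensional k (X ⟶ Y))
    (hend : ∀ X : C, Simple X → Module.finrank k (X ⟶ X) = 1)
    (hhom : ∀ X Y : C, Simple X → Simple Y → ¬ Nonempty (X ≅ Y) → ∀ f : X ⟶ Y, f = 0)
    -- (ii) the unit object is simple
    (hunit : Simple (𝟙_ C))
    -- (iii) weak duality for simple objects
    (hdual : ∀ M : C, Simple M → ∃ Md : C, Simple Md ∧
      Module.finrank k ((M ⊗ Md) ⟶ 𝟙_ C) = 1 ∧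
      Module.finrank k ((Md ⊗ M) ⟶ 𝟙_ C) = 1 ∧
      ∀ Y : C, Simple Y → ¬ Nonempty (Y ≅ Md) →
        (∀ f : (M ⊗ Y) ⟶ 𝟙_ C, f = 0) ∧ (∀ f : (Y ⊗ M) ⟶ 𝟙_ C, f = 0))
    -- M is simple with weak dual Md as in (iii)
    (M Md : C) (hM : Simple M) (hMd : Simple Md)
    (h1 : Module.finrank k ((M ⊗ Md) ⟶ 𝟙_ C) = 1)
    (h2 : Module.finrank k ((Md ⊗ M) ⟶ 𝟙_ C) = 1)
    (h3 : ∀ Y : C, Simple Y → ¬ Nonempty (Y ≅ Md) →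
      (∀ f : (M ⊗ Y) ⟶ 𝟙_ C, f = 0) ∧ (∀ f : (Y ⊗ M) ⟶ 𝟙_ C, f = 0))
    -- Y is an invertible simple object
    (Y : C) (hY : Simple Y) (hYinv : IsInvertibleObj Y) :
    (Nonempty ((M ⊗ Y) ≅ M) → Module.finrank k ((Md ⊗ M) ⟶ Y) = 1) ∧
    (¬ Nonempty ((M ⊗ Y) ≅ M) → Module.finrank k ((Md ⊗ M) ⟶ Y) = 0) ∧
    (Nonempty ((M ⊗ Y) ≅ M) ↔ Nonempty ((Y ⊗ Md) ≅ Md)) := by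
  obtain ⟨Y', ⟨e1⟩, ⟨e2⟩⟩ := hYinv
  -- the double dual of `Md` is `M`
  obtain ⟨Mdd, hMdd, hd1, hd2, hd3⟩ := hdual Md hMd
  have hMMdd : Nonempty (M ≅ Mdd) := by
    by_contra hc
    have h0 : Module.finrank k ((Md ⊗ M) ⟶ 𝟙_ C) = 0 :=
      finrank_zero_of_forall_zero ((hd3 M hM hc).1)
    rw [h2] at h0
    exact one_ne_zero h0
  obtain ⟨j⟩ := hMMdd
  -- values of `X ↦ dim Hom(Md ⊗ X, 1)` on simples
  have hD1 : ∀ X : C, Nonempty (X ≅ M) →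
      Module.finrank k ((Md ⊗ X) ⟶ 𝟙_ C) = 1 := by
    rintro X ⟨i⟩
    rw [finrank_hom_congr (k := k) (whiskerLeftIso Md (i ≪≫ j)) (Iso.refl _)]
    exact hd1
  have hD0 : ∀ X : C, Simple X → ¬ Nonempty (X ≅ M) →
      Module.finrank k ((Md ⊗ X) ⟶ 𝟙_ C) = 0 := by
    intro X hXs hX
    have hX' : ¬ Nonempty (X ≅ Mdd) := fun ⟨i⟩ => hX ⟨i ≪≫ j.symm⟩
    exact finrank_zero_of_forall_zero ((hd3 X hXs hX').1)
  -- values of `Z ↦ dim Hom(Z ⊗ M, 1)` on simples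
  have hE1 : ∀ Z : C, Nonempty (Z ≅ Md) →
      Module.finrank k ((Z ⊗ M) ⟶ 𝟙_ C) = 1 := by
    rintro Z ⟨i⟩
    rw [finrank_hom_congr (k := k) (whiskerRightIso i M) (Iso.refl _)]
    exact h2
  have hE0 : ∀ Z : C, Simple Z → ¬ Nonempty (Z ≅ Md) →
      Module.finrank k ((Z ⊗ M) ⟶ 𝟙_ C) = 0 := fun Z hZ h =>
    finrank_zero_of_forall_zero ((h3 Z hZ h).2)
  -- simplicity of the two tensor products with the inverse of `Y`
  have hsMY' : Simple (M ⊗ Y') :=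
    simple_of_finrank_end_one hss hfd
      (by rw [finrank_end_tensorRight hfd e1 e2]; exact hend M hM)
  have hsY'Md : Simple (Y' ⊗ Md) :=
    simple_of_finrank_end_one hss hfd
      (by rw [finrank_end_tensorLeft hfd e1 e2]; exact hend Md hMd)
  -- transporting the hom space
  have hr1 : Module.finrank k ((Md ⊗ M) ⟶ Y)
      = Module.finrank k ((Md ⊗ (M ⊗ Y')) ⟶ 𝟙_ C) := by
    rw [finrank_hom_tensorRight hfd e1 e2]
    exact finrank_hom_congr (k := k) (α_ Md M Y') (Iso.refl _)
  have hr2 : Module.finrank k ((Md ⊗ M) ⟶ Y)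
      = Module.finrank k (((Y' ⊗ Md) ⊗ M) ⟶ 𝟙_ C) := by
    rw [finrank_hom_tensorLeft hfd e1 e2]
    exact finrank_hom_congr (k := k) (α_ Y' Md M).symm (Iso.refl _)
  -- moving between `Y` and `Y'` in the iso conditions
  have hMY : Nonempty ((M ⊗ Y) ≅ M) ↔ Nonempty ((M ⊗ Y') ≅ M) := by
    constructor
    · rintro ⟨i⟩
      exact ⟨whiskerRightIso i.symm Y' ≪≫ α_ M Y Y' ≪≫ whiskerLeftIso M e1 ≪≫ ρ_ M⟩
    · rintro ⟨i⟩
      exact ⟨whiskerRightIso i.symm Y ≪≫ α_ M Y' Y ≪≫ whiskerLeftIso M e2 ≪≫ ρ_ M⟩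
  have hYMd : Nonempty ((Y ⊗ Md) ≅ Md) ↔ Nonempty ((Y' ⊗ Md) ≅ Md) := by
    constructor
    · rintro ⟨i⟩
      exact ⟨whiskerLeftIso Y' i.symm ≪≫ (α_ Y' Y Md).symm ≪≫ whiskerRightIso e2 Md ≪≫ λ_ Md⟩
    · rintro ⟨i⟩
      exact ⟨whiskerLeftIso Y i.symm ≪≫ (α_ Y Y' Md).symm ≪≫ whiskerRightIso e1 Md ≪≫ λ_ Md⟩
  -- the two dimension computations
  have key1 : Nonempty ((M ⊗ Y) ≅ M) → Module.finrank k ((Md ⊗ M) ⟶ Y) = 1 := by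
    intro h
    rw [hr1]
    exact hD1 (M ⊗ Y') (hMY.mp h)
  have key0 : ¬ Nonempty ((M ⊗ Y) ≅ M) → Module.finrank k ((Md ⊗ M) ⟶ Y) = 0 := by
    intro h
    rw [hr1]
    exact hD0 (M ⊗ Y') hsMY' (fun hn => h (hMY.mpr hn))
  refine ⟨key1, key0, ?_, ?_⟩
  · intro h
    have r1 := key1 h
    rw [hr2] at r1
    by_contra hc
    have hc' : ¬ Nonempty ((Y' ⊗ Md) ≅ Md) := fun hn => hc (hYMd.mpr hn)
    rw [hE0 _ hsY'Md hc'] at r1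
    exact zero_ne_one r1
  · intro h
    by_contra hc
    have r0 := key0 hc
    rw [hr2] at r0
    rw [hE1 _ (hYMd.mp h)] at r0
    exact one_ne_zero r0
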